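/- arXiv:2411.04867 — 3 statements merged into one kernel-verified Lean document; each statement's English description precedes it below -/
import Mathlib

section
/- Let π be a policy on 𝒜 and p a safety function on 𝒜 with P_π(safe) > 0. Then the shielded policy is at least as safe as the base policy: Σ_{a∈𝒜} p(a)·π⁺(a) ≥ Σ_{a∈𝒜} p(a)·π(a), i.e. P_{π⁺}(safe) ≥ P_π(safe). -/
/-- Shielding yields a policy at least as safe as the base policy. -/
theorem shielded_policy_at_least_as_safe
    {𝒜 : Type*} [Fintype 𝒜] [Nonempty 𝒜]
    (π p : 𝒜 → ℝ)
    (hπ0 : ∀ a, 0 ≤ π a) (hπ1 : ∑ a, π a = 1)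
    (hp0 : ∀ a, 0 ≤ p a) (hp1 : ∀ a, p a ≤ 1)
    (hpos : 0 < ∑ a, p a * π a) :
    ∑ a, p a * (p a * π a / ∑ b, p b * π b) ≥ ∑ a, p a * π a := by
  set S := ∑ b, p b * π b with hS
  have key : S ^ 2 ≤ ∑ a, p a * (p a * π a) := by
    have h := Finset.sum_mul_sq_le_sq_mul_sq Finset.univ
      (fun a => Real.sqrt (π a)) (fun a => p a * Real.sqrt (π a))
    have h1 : ∀ a : 𝒜, Real.sqrt (π a) * (p a * Real.sqrt (π a)) = p a * π a := by
      intro a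
      rw [mul_comm (p a), ← mul_assoc, Real.mul_self_sqrt (hπ0 a), mul_comm]
    have h2 : ∀ a : 𝒜, Real.sqrt (π a) ^ 2 = π a := fun a => Real.sq_sqrt (hπ0 a)
    have h3 : ∀ a : 𝒜, (p a * Real.sqrt (π a)) ^ 2 = p a * (p a * π a) := by
      intro a; rw [mul_pow, Real.sq_sqrt (hπ0 a), sq]; ring
    simp only [h1, h2, h3, hπ1, one_mul] at h
    exact h
  have : ∑ a, p a * (p a * π a / S) = (∑ a, p a * (p a * π a)) / S := by
    rw [Finset.sum_div]; congr 1; ext a; ring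
  rw [ge_iff_le, this, le_div_iff₀ hpos]
  calc S * S = S ^ 2 := (sq S).symm
    _ ≤ _ := key
end

section
/- Let π be a policy on 𝒜 and p a safety function on 𝒜 with P_π(safe) > 0. If there exist actions a, a' ∈ 𝒜 with π(a) > 0, π(a') > 0 and p(a) ≠ p(a'), then shielding strictly improves safety: Σ_{a∈𝒜} p(a)·π⁺(a) > Σ_{a∈𝒜} p(a)·π(a), i.e. P_{π⁺}(safe) > P_π(safe). -/
/-- Shielding strictly improves safety when the base policy mixes actions of
different safety levels. -/
theorem shielded_policy_strictly_safer
    {𝒜 : Type*} [Fintype 𝒜] [Nonempty 𝒜]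
    (π p : 𝒜 → ℝ)
    (hπ0 : ∀ a, 0 ≤ π a) (hπ1 : ∑ a, π a = 1)
    (hp0 : ∀ a, 0 ≤ p a) (hp1 : ∀ a, p a ≤ 1)
    (hpos : 0 < ∑ a, p a * π a)
    (hmix : ∃ a a', 0 < π a ∧ 0 < π a' ∧ p a ≠ p a') :
    ∑ a, p a * (p a * π a / ∑ b, p b * π b) > ∑ a, p a * π a := by
  set S := ∑ b, p b * π b with hS
  obtain ⟨a, a', ha, ha', hne⟩ := hmix
  have hnn : ∀ x ∈ Finset.univ, 0 ≤ π x * (p x - S) ^ 2 := fun x _ =>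
    mul_nonneg (hπ0 x) (sq_nonneg _)
  have key : 0 < ∑ x, π x * (p x - S) ^ 2 := by
    rcases ne_or_eq (p a) S with h | h
    · exact Finset.sum_pos' hnn ⟨a, Finset.mem_univ a,
        mul_pos ha (by have := sub_ne_zero.mpr h; positivity)⟩
    · have h' : p a' - S ≠ 0 := sub_ne_zero.mpr fun hh => hne (h.trans hh.symm)
      exact Finset.sum_pos' hnn ⟨a', Finset.mem_univ a',
        mul_pos ha' (by positivity)⟩
  have expand : ∑ x, π x * (p x - S) ^ 2 = (∑ x, p x ^ 2 * π x) - S ^ 2 := by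
    have h1 : ∀ x ∈ Finset.univ, π x * (p x - S) ^ 2
        = p x ^ 2 * π x - 2 * S * (p x * π x) + S ^ 2 * π x := fun x _ => by ring
    rw [Finset.sum_congr rfl h1, Finset.sum_add_distrib, Finset.sum_sub_distrib,
      ← Finset.mul_sum, ← Finset.mul_sum, hπ1, ← hS]
    ring
  have hrw : ∑ x, p x * (p x * π x / S) = (∑ x, p x ^ 2 * π x) / S := by
    rw [Finset.sum_div]
    exact Finset.sum_congr rfl fun x _ => by ring
  rw [gt_iff_lt, hrw, lt_div_iff₀ hpos]
  nlinarith [key, expand]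
end

section
/- (Safety of shielded joint policies.) Consider n agents indexed by i ∈ {1,…,n}, a set S of states, and for each agent i and state s ∈ S a policy π_i(·|s) on a finite nonempty action set 𝒜_i together with a safety function p_i(·|s) on 𝒜_i, with P_{π_i}(safe|s) = Σ_{a∈𝒜_i} p_i(a|s)·π_i(a|s) > 0. Then the joint shielded policy ⟨π_1⁺,…,π_n⁺⟩ is at least as safe as the base joint policy ⟨π_1,…,π_n⟩: for every agent i and every state s, P_{π_i⁺}(safe|s) ≥ P_{π_i}(safe|s). Moreover, it is strictly safer whenever some base policy violates its shield in the sense that for some agent j and state s there exist actions a, a' with π_j(a|s) > 0, π_j(a'|s) > 0 and p_j(a|s) ≠ p_j(a'|s); in that case P_{π_j⁺}(safe|s) > P_{π_j}(safe|s). -/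
lemma variance_identity {α : Type*} [Fintype α] (f g : α → ℝ)
    (h1 : ∑ a, f a = 1) :
    ∑ a, f a * (g a - ∑ b, g b * f b) ^ 2
      = ∑ a, g a * (g a * f a) - (∑ b, g b * f b) ^ 2 := by
  set T := ∑ b, g b * f b with hT
  have h : ∀ a, f a * (g a - T) ^ 2
      = g a * (g a * f a) - 2 * T * (g a * f a) + T ^ 2 * f a := by
    intro a; ring
  simp only [h, Finset.sum_add_distrib, Finset.sum_sub_distrib,
    ← Finset.mul_sum, ← hT, h1]
  ring

lemma key_lemma {α : Type*} [Fintype α] (f g : α → ℝ)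
    (hf : ∀ a, 0 ≤ f a) (h1 : ∑ a, f a = 1) :
    (∑ b, g b * f b) ^ 2 ≤ ∑ a, g a * (g a * f a) := by
  have h := variance_identity f g h1
  have hnn : 0 ≤ ∑ a, f a * (g a - ∑ b, g b * f b) ^ 2 :=
    Finset.sum_nonneg fun a _ => mul_nonneg (hf a) (sq_nonneg _)
  linarith

lemma key_lemma_strict {α : Type*} [Fintype α] (f g : α → ℝ)
    (hf : ∀ a, 0 ≤ f a) (h1 : ∑ a, f a = 1)
    (a a' : α) (ha : 0 < f a) (ha' : 0 < f a') (hne : g a ≠ g a') :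
    (∑ b, g b * f b) ^ 2 < ∑ c, g c * (g c * f c) := by
  have h := variance_identity f g h1
  set T := ∑ b, g b * f b with hT
  have hex : ∃ c, 0 < f c * (g c - T) ^ 2 := by
    rcases eq_or_ne (g a) T with h1' | h1'
    · have : g a' ≠ T := fun hc => hne (h1'.trans hc.symm)
      exact ⟨a', mul_pos ha' (sq_pos_of_ne_zero (sub_ne_zero.mpr this))⟩
    · exact ⟨a, mul_pos ha (sq_pos_of_ne_zero (sub_ne_zero.mpr h1'))⟩
  obtain ⟨c, hc⟩ := hex
  have hpos : 0 < ∑ c, f c * (g c - T) ^ 2 :=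
    Finset.sum_pos' (fun b _ => mul_nonneg (hf b) (sq_nonneg _))
      ⟨c, Finset.mem_univ c, hc⟩
  linarith

/-- Safety of shielded joint policies: the joint shielded policy is at least as
safe as the base joint policy, and strictly safer whenever some base policy
violates its shield. -/
theorem joint_shielded_policy_safety
    {n : ℕ} {S : Type*} (𝒜 : Fin n → Type*)
    [∀ i, Fintype (𝒜 i)] [∀ i, Nonempty (𝒜 i)]
    (π p : ∀ i, S → 𝒜 i → ℝ)
    (hπ0 : ∀ i s a, 0 ≤ π i s a) (hπ1 : ∀ i s, ∑ a, π i s a = 1)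
    (hp0 : ∀ i s a, 0 ≤ p i s a) (hp1 : ∀ i s a, p i s a ≤ 1)
    (hpos : ∀ i s, 0 < ∑ a, p i s a * π i s a) :
    (∀ i s, ∑ a, p i s a * (p i s a * π i s a / ∑ b, p i s b * π i s b)
        ≥ ∑ a, p i s a * π i s a) ∧
    (∀ j s, (∃ a a', 0 < π j s a ∧ 0 < π j s a' ∧ p j s a ≠ p j s a') →
      ∑ a, p j s a * (p j s a * π j s a / ∑ b, p j s b * π j s b)
        > ∑ a, p j s a * π j s a) := by
  constructor
  · intro i s
    have hT := hpos i s
    have key := key_lemma (π i s) (p i s) (hπ0 i s) (hπ1 i s)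
    have heq : ∑ a, p i s a * (p i s a * π i s a / ∑ b, p i s b * π i s b)
        = (∑ a, p i s a * (p i s a * π i s a)) / ∑ b, p i s b * π i s b := by
      rw [Finset.sum_div]; exact Finset.sum_congr rfl fun a _ => by ring
    rw [ge_iff_le, heq, le_div_iff₀ hT]
    calc (∑ a, p i s a * π i s a) * (∑ a, p i s a * π i s a)
        = (∑ b, p i s b * π i s b) ^ 2 := by ring
      _ ≤ ∑ a, p i s a * (p i s a * π i s a) := key
  · intro j s ⟨a, a', ha, ha', hne⟩
    have hT := hpos j s
    have key := key_lemma_strict (π j s) (p j s) (hπ0 j s) (hπ1 j s) a a' ha ha' hne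
    have heq : ∑ a, p j s a * (p j s a * π j s a / ∑ b, p j s b * π j s b)
        = (∑ a, p j s a * (p j s a * π j s a)) / ∑ b, p j s b * π j s b := by
      rw [Finset.sum_div]; exact Finset.sum_congr rfl fun a _ => by ring
    rw [gt_iff_lt, heq, lt_div_iff₀ hT]
    calc (∑ a, p j s a * π j s a) * (∑ a, p j s a * π j s a)
        = (∑ b, p j s b * π j s b) ^ 2 := by ring
      _ < ∑ a, p j s a * (p j s a * π j s a) := key
end
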